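/- arXiv:2605.17709 — 6 statements merged into one kernel-verified Lean document; each statement's English description precedes it below -/
import Mathlib

section
/- Let J be the 4×4 Jacobian of the linearized crime–police system. For every complex number λ, det(λ·I − J) = (λ + μ)·(λ + 1/τ)·(λ² + b₁·λ + b₀) + (2·μ·π̄/τ)·(λ + η·μ + 1)·(λ + μ + α), where b₁ = (1+η)·μ + 1 + α − ζ and b₀ = (η·μ+1)·(μ+α) − 3·μ·ζ. -/
/-!
Expanding along the last column,
`det (λ • 1 - J) = Q · ((λ + μ) (λ + 1/τ) + 2 μ π̄ / τ) + (2 μ π̄ / τ) · ζ (λ + 3 μ)`, where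
`Q = λ² + b₁ λ + b₀` is the characteristic polynomial of the upper-left `2 × 2` block: this uses
`α · 2 μ ρ̄ / Ā = 2 μ ζ` and `H̄ · 2 μ π̄ / H̄ = 2 μ π̄`. The claim then follows from
`Q + ζ (λ + 3 μ) = (λ + η μ + 1) (λ + μ + α)`.
-/

theorem Matrix.det_smul_one_sub_fin_four_sparse {R : Type*} [CommRing R]
    (x a b c d e f g h i k l : R) :
    (x • (1 : Matrix (Fin 4) (Fin 4) R) - !![a, b, c, 0; d, e, 0, 0; 0, 0, f, g; h, i, k, l]).det
      = ((x - a) * (x - e) - b * d) * ((x - f) * (x - l) - g * k)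
        - c * g * (d * i + (x - e) * h) := by
  simp [Matrix.det_succ_row_zero, Fin.sum_univ_succ, Matrix.one_apply, Fin.succAbove]
  ring

theorem stmt_0_general (η μ τ πbar Abar ρbar Hbar α ζ b₁ b₀ : ℝ)
    (hA : 0 < Abar) (hρ : 0 < ρbar)
    (hH : Hbar = ρbar * Abar * Real.exp (-πbar))
    (hα : α = Abar * Real.exp (-πbar))
    (hζ : ζ = ρbar * Real.exp (-πbar))
    (hb₁ : b₁ = (1 + η) * μ + 1 + α - ζ)
    (hb₀ : b₀ = (η * μ + 1) * (μ + α) - 3 * μ * ζ)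
    (J : Matrix (Fin 4) (Fin 4) ℂ)
    (hJ : J = !![((-η * μ - 1 + ζ : ℝ) : ℂ), ((α : ℝ) : ℂ), ((-Hbar : ℝ) : ℂ), 0;
                 ((2 * μ * ρbar / Abar - ζ : ℝ) : ℂ), ((-μ - α : ℝ) : ℂ), 0, 0;
                 0, 0, ((-μ : ℝ) : ℂ), ((2 * μ * πbar / Hbar : ℝ) : ℂ);
                 ((ζ / τ : ℝ) : ℂ), ((α / τ : ℝ) : ℂ), ((-Hbar / τ : ℝ) : ℂ), ((-1 / τ : ℝ) : ℂ)]) :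
    ∀ lam : ℂ,
      (lam • (1 : Matrix (Fin 4) (Fin 4) ℂ) - J).det
        = (lam + (μ : ℂ)) * (lam + 1 / (τ : ℂ)) * (lam ^ 2 + (b₁ : ℂ) * lam + (b₀ : ℂ))
          + (2 * (μ : ℂ) * (πbar : ℂ) / (τ : ℂ)) * (lam + (η : ℂ) * (μ : ℂ) + 1)
            * (lam + (μ : ℂ) + (α : ℂ)) := by
  intro lam
  subst hJ hH hα hζ hb₁ hb₀
  rw [Matrix.det_smul_one_sub_fin_four_sparse]
  have hA' : (Abar : ℂ) ≠ 0 := by exact_mod_cast hA.ne'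
  have hρ' : (ρbar : ℂ) ≠ 0 := by exact_mod_cast hρ.ne'
  have he : (Real.exp (-πbar) : ℂ) ≠ 0 := by exact_mod_cast (Real.exp_pos _).ne'
  push_cast
  field_simp
  ring

/-- Factorized form of the characteristic polynomial of the 4×4 Jacobian of the
linearized crime–police system. -/
theorem stmt_0 (η μ τ πbar Abar ρbar Hbar α ζ b₁ b₀ : ℝ)
    (hη : 0 < η) (hμ : 0 ≤ μ) (hτ : 0 < τ) (hπ : 0 ≤ πbar)
    (hA : 0 < Abar) (hρ : 0 < ρbar)
    (hH : Hbar = ρbar * Abar * Real.exp (-πbar))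
    (hα : α = Abar * Real.exp (-πbar))
    (hζ : ζ = ρbar * Real.exp (-πbar))
    (hb₁ : b₁ = (1 + η) * μ + 1 + α - ζ)
    (hb₀ : b₀ = (η * μ + 1) * (μ + α) - 3 * μ * ζ)
    (J : Matrix (Fin 4) (Fin 4) ℂ)
    (hJ : J = !![((-η * μ - 1 + ζ : ℝ) : ℂ), ((α : ℝ) : ℂ), ((-Hbar : ℝ) : ℂ), 0;
                 ((2 * μ * ρbar / Abar - ζ : ℝ) : ℂ), ((-μ - α : ℝ) : ℂ), 0, 0;
                 0, 0, ((-μ : ℝ) : ℂ), ((2 * μ * πbar / Hbar : ℝ) : ℂ);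
                 ((ζ / τ : ℝ) : ℂ), ((α / τ : ℝ) : ℂ), ((-Hbar / τ : ℝ) : ℂ), ((-1 / τ : ℝ) : ℂ)]) :
    ∀ lam : ℂ,
      (lam • (1 : Matrix (Fin 4) (Fin 4) ℂ) - J).det
        = (lam + (μ : ℂ)) * (lam + 1 / (τ : ℂ)) * (lam ^ 2 + (b₁ : ℂ) * lam + (b₀ : ℂ))
          + (2 * (μ : ℂ) * (πbar : ℂ) / (τ : ℂ)) * (lam + (η : ℂ) * (μ : ℂ) + 1)
            * (lam + (μ : ℂ) + (α : ℂ)) :=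
  stmt_0_general η μ τ πbar Abar ρbar Hbar α ζ b₁ b₀ hA hρ hH hα hζ hb₁ hb₀ J hJ
end

section
/- Let J be the 4×4 Jacobian of the linearized crime–police system. For every complex number λ, det(λ·I − J) = λ⁴ + a₃·λ³ + a₂·λ² + a₁·λ + a₀, where a₃ = (2+η)·μ + 1 + α − ζ + 1/τ; a₂ = (1+2η)·μ² + 2·μ + (1+η)·μ·α + α − 4·μ·ζ + (1/τ)·[(2+η)·μ + 1 + α − ζ + 2·μ·π̄]; a₁ = μ·(η·μ+1)·(μ+α) − 3·μ²·ζ + (1/τ)·[(1+2η)·μ² + 2·μ + (1+η)·μ·α + α − 4·μ·ζ + 2·μ·π̄·((1+η)·μ + 1 + α)]; and a₀ = (μ/τ)·[(1+2·π̄)·(η·μ+1)·(μ+α) − 3·μ·ζ]. -/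
/-!
Expanding along the last column, the characteristic determinant of a matrix with the sparsity
pattern of `J` splits as (crime block) × (police block) plus one coupling term. For `J` the
equilibrium relations `ρ̄ α / Ā = ζ` and `H̄ = ρ̄ α` collapse the off-diagonal products, giving
`det (λ - J) = [(λ + ημ + 1 - ζ)(λ + μ + α) - 2μζ + αζ] [(λ + μ)(λ + 1/τ) + 2μπ̄/τ]
  + 2μπ̄ζ(λ + 3μ)/τ`, whose expansion is the stated quartic.
-/

open Matrix

theorem Matrix.det_fin_four_of_sparse {R : Type*} [CommRing R] (a b c d e f g h i j k : R) :
    det !![a, b, c, 0; d, e, 0, 0; 0, 0, f, g; h, i, j, k]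
      = (a * e - b * d) * (f * k - g * j) - c * g * (d * i - e * h) := by
  rw [det_succ_column _ 3]
  simp [Fin.sum_univ_four, det_fin_three, Fin.succAbove, submatrix]
  ring

theorem Matrix.det_smul_one_sub_of_sparse {R : Type*} [CommRing R]
    (x a b c d e f g h i j k : R) :
    det (x • (1 : Matrix (Fin 4) (Fin 4) R) - !![a, b, c, 0; d, e, 0, 0; 0, 0, f, g; h, i, j, k])
      = ((x - a) * (x - e) - b * d) * ((x - f) * (x - k) - g * j)
        - c * g * (d * i + (x - e) * h) := by
  have hM : x • (1 : Matrix (Fin 4) (Fin 4) R) - !![a, b, c, 0; d, e, 0, 0; 0, 0, f, g; h, i, j, k]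
      = !![x - a, -b, -c, 0; -d, x - e, 0, 0; 0, 0, x - f, -g; -h, -i, -j, x - k] := by
    ext p q
    fin_cases p <;> fin_cases q <;> simp
  rw [hM, det_fin_four_of_sparse]
  ring

theorem stmt_1_general (η μ τ πbar Abar ρbar Hbar α ζ a₀ a₁ a₂ a₃ : ℝ)
    (hA : 0 < Abar) (hρ : 0 < ρbar)
    (hH : Hbar = ρbar * Abar * Real.exp (-πbar))
    (hα : α = Abar * Real.exp (-πbar))
    (hζ : ζ = ρbar * Real.exp (-πbar))
    (ha₃ : a₃ = (2 + η) * μ + 1 + α - ζ + 1 / τ)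
    (ha₂ : a₂ = (1 + 2 * η) * μ ^ 2 + 2 * μ + (1 + η) * μ * α + α - 4 * μ * ζ
        + (1 / τ) * ((2 + η) * μ + 1 + α - ζ + 2 * μ * πbar))
    (ha₁ : a₁ = μ * (η * μ + 1) * (μ + α) - 3 * μ ^ 2 * ζ
        + (1 / τ) * ((1 + 2 * η) * μ ^ 2 + 2 * μ + (1 + η) * μ * α + α - 4 * μ * ζ
            + 2 * μ * πbar * ((1 + η) * μ + 1 + α)))
    (ha₀ : a₀ = (μ / τ) * ((1 + 2 * πbar) * (η * μ + 1) * (μ + α) - 3 * μ * ζ))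
    (J : Matrix (Fin 4) (Fin 4) ℂ)
    (hJ : J = !![((-η * μ - 1 + ζ : ℝ) : ℂ), ((α : ℝ) : ℂ), ((-Hbar : ℝ) : ℂ), 0;
                 ((2 * μ * ρbar / Abar - ζ : ℝ) : ℂ), ((-μ - α : ℝ) : ℂ), 0, 0;
                 0, 0, ((-μ : ℝ) : ℂ), ((2 * μ * πbar / Hbar : ℝ) : ℂ);
                 ((ζ / τ : ℝ) : ℂ), ((α / τ : ℝ) : ℂ), ((-Hbar / τ : ℝ) : ℂ), ((-1 / τ : ℝ) : ℂ)]) :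
    ∀ lam : ℂ,
      (lam • (1 : Matrix (Fin 4) (Fin 4) ℂ) - J).det
        = lam ^ 4 + (a₃ : ℂ) * lam ^ 3 + (a₂ : ℂ) * lam ^ 2 + (a₁ : ℂ) * lam + (a₀ : ℂ) := by
  intro lam
  have hA₀ : Abar ≠ 0 := hA.ne'
  have hH₀ : Hbar ≠ 0 := by rw [hH]; positivity
  have hρα : ρbar * α / Abar = ζ := by rw [hα, hζ]; field_simp
  have hbd : α * (2 * μ * ρbar / Abar - ζ) = 2 * μ * ζ - α * ζ := by
    rw [← hρα]; ring
  have hdi : (2 * μ * ρbar / Abar - ζ) * (α / τ) = (2 * μ * ζ - α * ζ) / τ := by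
    rw [← hbd]; ring
  have hgj : 2 * μ * πbar / Hbar * (-Hbar / τ) = -(2 * μ * πbar / τ) := by
    field_simp
  have hcg : -Hbar * (2 * μ * πbar / Hbar) = -(2 * μ * πbar) := by
    field_simp
  rw [hJ, det_smul_one_sub_of_sparse]
  simp only [← Complex.ofReal_mul, hbd, hdi, hgj, hcg]
  subst ha₀ ha₁ ha₂ ha₃
  push_cast
  ring

/-- Expanded form of the characteristic polynomial of the 4×4 Jacobian of the
linearized crime–police system. -/
theorem stmt_1 (η μ τ πbar Abar ρbar Hbar α ζ a₀ a₁ a₂ a₃ : ℝ)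
    (hη : 0 < η) (hμ : 0 ≤ μ) (hτ : 0 < τ) (hπ : 0 ≤ πbar)
    (hA : 0 < Abar) (hρ : 0 < ρbar)
    (hH : Hbar = ρbar * Abar * Real.exp (-πbar))
    (hα : α = Abar * Real.exp (-πbar))
    (hζ : ζ = ρbar * Real.exp (-πbar))
    (ha₃ : a₃ = (2 + η) * μ + 1 + α - ζ + 1 / τ)
    (ha₂ : a₂ = (1 + 2 * η) * μ ^ 2 + 2 * μ + (1 + η) * μ * α + α - 4 * μ * ζ
        + (1 / τ) * ((2 + η) * μ + 1 + α - ζ + 2 * μ * πbar))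
    (ha₁ : a₁ = μ * (η * μ + 1) * (μ + α) - 3 * μ ^ 2 * ζ
        + (1 / τ) * ((1 + 2 * η) * μ ^ 2 + 2 * μ + (1 + η) * μ * α + α - 4 * μ * ζ
            + 2 * μ * πbar * ((1 + η) * μ + 1 + α)))
    (ha₀ : a₀ = (μ / τ) * ((1 + 2 * πbar) * (η * μ + 1) * (μ + α) - 3 * μ * ζ))
    (J : Matrix (Fin 4) (Fin 4) ℂ)
    (hJ : J = !![((-η * μ - 1 + ζ : ℝ) : ℂ), ((α : ℝ) : ℂ), ((-Hbar : ℝ) : ℂ), 0;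
                 ((2 * μ * ρbar / Abar - ζ : ℝ) : ℂ), ((-μ - α : ℝ) : ℂ), 0, 0;
                 0, 0, ((-μ : ℝ) : ℂ), ((2 * μ * πbar / Hbar : ℝ) : ℂ);
                 ((ζ / τ : ℝ) : ℂ), ((α / τ : ℝ) : ℂ), ((-Hbar / τ : ℝ) : ℂ), ((-1 / τ : ℝ) : ℂ)]) :
    ∀ lam : ℂ,
      (lam • (1 : Matrix (Fin 4) (Fin 4) ℂ) - J).det
        = lam ^ 4 + (a₃ : ℂ) * lam ^ 3 + (a₂ : ℂ) * lam ^ 2 + (a₁ : ℂ) * lam + (a₀ : ℂ) :=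
  stmt_1_general η μ τ πbar Abar ρbar Hbar α ζ a₀ a₁ a₂ a₃ hA hρ hH hα hζ ha₃ ha₂ ha₁ ha₀ J hJ
end

section
/- Let J be the 4×4 Jacobian of the linearized crime–police system with π̄ = 0 (no police; then α = Ā and ζ = ρ̄). For every complex number λ, det(λ·I − J) = (λ + μ)·(λ + 1/τ)·(λ² + b₁·λ + b₀), where b₁ = (1+η)·μ + 1 + Ā − ρ̄ and b₀ = (η·μ+1)·(μ+Ā) − 3·μ·ρ̄; in particular the characteristic polynomial splits into the explicit linear factors λ + μ and λ + 1/τ and a quadratic factor whose coefficients do not depend on τ. -/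
/-! In `λI - J` the third row vanishes off the diagonal and the fourth column vanishes off the
diagonal, so the determinant is `(λ + μ)(λ + 1/τ)` times the determinant of the upper-left
`2 × 2` block; in that block the product of the off-diagonal entries is `Ā (2μρ̄/Ā - ρ̄)`,
in which `Ā` cancels to leave the `τ`-free quadratic. -/

theorem Matrix.det_fin_four_of_row_two_col_three {R : Type*} [CommRing R]
    (M : Matrix (Fin 4) (Fin 4) R)
    (h20 : M 2 0 = 0) (h21 : M 2 1 = 0) (h23 : M 2 3 = 0)
    (h03 : M 0 3 = 0) (h13 : M 1 3 = 0) :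
    M.det = M 2 2 * M 3 3 * (M 0 0 * M 1 1 - M 0 1 * M 1 0) := by
  rw [Matrix.det_succ_row _ 2]
  simp [Fin.sum_univ_succ, Matrix.det_succ_column _ 2, Fin.succAbove, h20, h21, h23, h03, h13]
  ring

theorem stmt_2_general (η μ τ Abar ρbar Hbar b₁ b₀ : ℝ)
    (hA : 0 < Abar)
    (hb₁ : b₁ = (1 + η) * μ + 1 + Abar - ρbar)
    (hb₀ : b₀ = (η * μ + 1) * (μ + Abar) - 3 * μ * ρbar)
    (J : Matrix (Fin 4) (Fin 4) ℂ)
    (hJ : J = !![((-η * μ - 1 + ρbar : ℝ) : ℂ), ((Abar : ℝ) : ℂ), ((-Hbar : ℝ) : ℂ), 0;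
                 ((2 * μ * ρbar / Abar - ρbar : ℝ) : ℂ), ((-μ - Abar : ℝ) : ℂ), 0, 0;
                 0, 0, ((-μ : ℝ) : ℂ), 0;
                 ((ρbar / τ : ℝ) : ℂ), ((Abar / τ : ℝ) : ℂ), ((-Hbar / τ : ℝ) : ℂ), ((-1 / τ : ℝ) : ℂ)]) :
    ∀ lam : ℂ,
      (lam • (1 : Matrix (Fin 4) (Fin 4) ℂ) - J).det
        = (lam + (μ : ℂ)) * (lam + 1 / (τ : ℂ)) * (lam ^ 2 + (b₁ : ℂ) * lam + (b₀ : ℂ)) := by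
  intro lam
  have hA' : (Abar : ℂ) ≠ 0 := by exact_mod_cast hA.ne'
  rw [Matrix.det_fin_four_of_row_two_col_three]
  · simp only [hJ, hb₁, hb₀, Matrix.sub_apply, Matrix.smul_apply, smul_eq_mul,
      Matrix.one_apply_eq, Matrix.one_apply_ne, ne_eq, Fin.reduceEq, not_false_eq_true,
      Matrix.of_apply, Matrix.cons_val', Matrix.cons_val, Matrix.cons_val_fin_one]
    push_cast
    field_simp
    ring
  all_goals simp [hJ]

/-- In the no-police case `π̄ = 0`, the characteristic polynomial of the 4×4 Jacobian
splits into the explicit linear factors `λ + μ` and `λ + 1/τ` and a quadratic factor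
whose coefficients do not depend on `τ`. -/
theorem stmt_2 (η μ τ Abar ρbar Hbar b₁ b₀ : ℝ)
    (hη : 0 < η) (hμ : 0 ≤ μ) (hτ : 0 < τ)
    (hA : 0 < Abar) (hρ : 0 < ρbar)
    (hH : Hbar = ρbar * Abar)
    (hb₁ : b₁ = (1 + η) * μ + 1 + Abar - ρbar)
    (hb₀ : b₀ = (η * μ + 1) * (μ + Abar) - 3 * μ * ρbar)
    (J : Matrix (Fin 4) (Fin 4) ℂ)
    (hJ : J = !![((-η * μ - 1 + ρbar : ℝ) : ℂ), ((Abar : ℝ) : ℂ), ((-Hbar : ℝ) : ℂ), 0;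
                 ((2 * μ * ρbar / Abar - ρbar : ℝ) : ℂ), ((-μ - Abar : ℝ) : ℂ), 0, 0;
                 0, 0, ((-μ : ℝ) : ℂ), 0;
                 ((ρbar / τ : ℝ) : ℂ), ((Abar / τ : ℝ) : ℂ), ((-Hbar / τ : ℝ) : ℂ), ((-1 / τ : ℝ) : ℂ)]) :
    ∀ lam : ℂ,
      (lam • (1 : Matrix (Fin 4) (Fin 4) ℂ) - J).det
        = (lam + (μ : ℂ)) * (lam + 1 / (τ : ℂ)) * (lam ^ 2 + (b₁ : ℂ) * lam + (b₀ : ℂ)) :=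
  stmt_2_general η μ τ Abar ρbar Hbar b₁ b₀ hA hb₁ hb₀ J hJ
end

section
/- Let J be the 4×4 Jacobian of the linearized crime–police system with π̄ = 0 (no police) and assume μ > 0. If λ ∈ ℂ is a root of det(λ·I − J) = 0 with Re(λ) ≥ 0, then λ² + b₁·λ + b₀ = 0, where b₁ = (1+η)·μ + 1 + Ā − ρ̄ and b₀ = (η·μ+1)·(μ+Ā) − 3·μ·ρ̄ are independent of τ. Hence as τ varies no new root with nonnegative real part can appear, and a delay-induced Hopf bifurcation is impossible without police. -/
/-!
Without police, the third row and the fourth column of `J` vanish off the diagonal, so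
`det (λ I - J)` factors as `(λ + μ) (λ + 1/τ)` times the characteristic polynomial of the
upper-left `2 × 2` block, which is `λ² + b₁ λ + b₀`. The first two factors only have the negative
roots `-μ` and `-1/τ`, and the delay `τ` enters nowhere else.
-/

open Matrix

theorem Matrix.det_fin_four_of_block {R : Type*} [CommRing R] (M : Matrix (Fin 4) (Fin 4) R)
    (h20 : M 2 0 = 0) (h21 : M 2 1 = 0) (h03 : M 0 3 = 0) (h13 : M 1 3 = 0) (h23 : M 2 3 = 0) :
    M.det = M 2 2 * M 3 3 * (M 0 0 * M 1 1 - M 0 1 * M 1 0) := by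
  rw [det_succ_column M 3]
  simp [Fin.sum_univ_succ, det_fin_three, submatrix_apply, Fin.succAbove, Fin.ext_iff, h20, h21,
    h03, h13, h23]
  ring

theorem Complex.add_ofReal_ne_zero_of_re_nonneg {z : ℂ} {c : ℝ} (hc : 0 < c) (hz : 0 ≤ z.re) :
    z + c ≠ 0 := by
  intro h
  have hre := congrArg Complex.re h
  simp at hre
  linarith

theorem det_smul_one_sub_jacobian_noPolice {K : Type*} [Field K] (η μ τ A ρ lam : K) (hA : A ≠ 0) :
    (lam • (1 : Matrix (Fin 4) (Fin 4) K) -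
      !![-η * μ - 1 + ρ, A, -(ρ * A), 0;
         2 * μ * ρ / A - ρ, -μ - A, 0, 0;
         0, 0, -μ, 0;
         ρ / τ, A / τ, -(ρ * A) / τ, -1 / τ]).det =
      (lam + μ) * (lam + τ⁻¹) *
        (lam ^ 2 + ((1 + η) * μ + 1 + A - ρ) * lam + ((η * μ + 1) * (μ + A) - 3 * μ * ρ)) := by
  rw [det_fin_four_of_block] <;> simp
  field_simp
  ring

theorem stmt_3_general (η μ τ Abar ρbar Hbar b₁ b₀ : ℝ)
    (hμ : 0 < μ) (hτ : 0 < τ)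
    (hA : 0 < Abar)
    (hH : Hbar = ρbar * Abar)
    (hb₁ : b₁ = (1 + η) * μ + 1 + Abar - ρbar)
    (hb₀ : b₀ = (η * μ + 1) * (μ + Abar) - 3 * μ * ρbar)
    (J : Matrix (Fin 4) (Fin 4) ℂ)
    (hJ : J = !![((-η * μ - 1 + ρbar : ℝ) : ℂ), ((Abar : ℝ) : ℂ), ((-Hbar : ℝ) : ℂ), 0;
                 ((2 * μ * ρbar / Abar - ρbar : ℝ) : ℂ), ((-μ - Abar : ℝ) : ℂ), 0, 0;
                 0, 0, ((-μ : ℝ) : ℂ), 0;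
                 ((ρbar / τ : ℝ) : ℂ), ((Abar / τ : ℝ) : ℂ), ((-Hbar / τ : ℝ) : ℂ), ((-1 / τ : ℝ) : ℂ)]) :
    ∀ lam : ℂ,
      (lam • (1 : Matrix (Fin 4) (Fin 4) ℂ) - J).det = 0 →
      0 ≤ lam.re →
      lam ^ 2 + (b₁ : ℂ) * lam + (b₀ : ℂ) = 0 := by
  intro lam hdet hre
  subst hJ hH hb₁ hb₀
  push_cast at hdet ⊢
  rw [det_smul_one_sub_jacobian_noPolice _ _ _ _ _ _ (by exact_mod_cast hA.ne')] at hdet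
  have hμ_root : lam + μ ≠ 0 := Complex.add_ofReal_ne_zero_of_re_nonneg hμ hre
  have hτ_root : lam + (τ : ℂ)⁻¹ ≠ 0 := by
    exact_mod_cast Complex.add_ofReal_ne_zero_of_re_nonneg (inv_pos.2 hτ) hre
  exact (mul_eq_zero.1 hdet).resolve_left (mul_ne_zero hμ_root hτ_root)

/-- Without police (`π̄ = 0`) and for a nonzero spatial mode `μ > 0`, any root of the
characteristic polynomial with nonnegative real part must be a root of the
`τ`-independent quadratic `λ² + b₁ λ + b₀`; hence no delay-induced Hopf bifurcation
is possible without police. -/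
theorem stmt_3 (η μ τ Abar ρbar Hbar b₁ b₀ : ℝ)
    (hη : 0 < η) (hμ : 0 < μ) (hτ : 0 < τ)
    (hA : 0 < Abar) (hρ : 0 < ρbar)
    (hH : Hbar = ρbar * Abar)
    (hb₁ : b₁ = (1 + η) * μ + 1 + Abar - ρbar)
    (hb₀ : b₀ = (η * μ + 1) * (μ + Abar) - 3 * μ * ρbar)
    (J : Matrix (Fin 4) (Fin 4) ℂ)
    (hJ : J = !![((-η * μ - 1 + ρbar : ℝ) : ℂ), ((Abar : ℝ) : ℂ), ((-Hbar : ℝ) : ℂ), 0;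
                 ((2 * μ * ρbar / Abar - ρbar : ℝ) : ℂ), ((-μ - Abar : ℝ) : ℂ), 0, 0;
                 0, 0, ((-μ : ℝ) : ℂ), 0;
                 ((ρbar / τ : ℝ) : ℂ), ((Abar / τ : ℝ) : ℂ), ((-Hbar / τ : ℝ) : ℂ), ((-1 / τ : ℝ) : ℂ)]) :
    ∀ lam : ℂ,
      (lam • (1 : Matrix (Fin 4) (Fin 4) ℂ) - J).det = 0 →
      0 ≤ lam.re →
      lam ^ 2 + (b₁ : ℂ) * lam + (b₀ : ℂ) = 0 :=
  stmt_3_general η μ τ Abar ρbar Hbar b₁ b₀ hμ hτ hA hH hb₁ hb₀ J hJ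
end

section
/- Let J be the 4×4 Jacobian of the linearized crime–police system with π̄ = 0 (no police), μ > 0, b₁ := (1+η)·μ + 1 + Ā − ρ̄ and b₀ := (η·μ+1)·(μ+Ā) − 3·μ·ρ̄. If b₁ > 0 and b₀ > 0, then for every τ > 0 every complex root λ of det(λ·I − J) = 0 satisfies Re(λ) < 0; i.e., the homogeneous equilibrium is linearly stable at mode μ for all delays τ. -/
lemma my_det_fin_four {R : Type*} [CommRing R] (M : Matrix (Fin 4) (Fin 4) R) :
    M.det =
      M 0 0 * M 1 1 * M 2 2 * M 3 3 - M 0 0 * M 1 1 * M 2 3 * M 3 2 -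
        M 0 0 * M 1 2 * M 2 1 * M 3 3 + M 0 0 * M 1 2 * M 2 3 * M 3 1 +
        M 0 0 * M 1 3 * M 2 1 * M 3 2 - M 0 0 * M 1 3 * M 2 2 * M 3 1 -
        M 0 1 * M 1 0 * M 2 2 * M 3 3 + M 0 1 * M 1 0 * M 2 3 * M 3 2 +
        M 0 1 * M 1 2 * M 2 0 * M 3 3 - M 0 1 * M 1 2 * M 2 3 * M 3 0 -
        M 0 1 * M 1 3 * M 2 0 * M 3 2 + M 0 1 * M 1 3 * M 2 2 * M 3 0 +
        M 0 2 * M 1 0 * M 2 1 * M 3 3 - M 0 2 * M 1 0 * M 2 3 * M 3 1 -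
        M 0 2 * M 1 1 * M 2 0 * M 3 3 + M 0 2 * M 1 1 * M 2 3 * M 3 0 +
        M 0 2 * M 1 3 * M 2 0 * M 3 1 - M 0 2 * M 1 3 * M 2 1 * M 3 0 -
        M 0 3 * M 1 0 * M 2 1 * M 3 2 + M 0 3 * M 1 0 * M 2 2 * M 3 1 +
        M 0 3 * M 1 1 * M 2 0 * M 3 2 - M 0 3 * M 1 1 * M 2 2 * M 3 0 -
        M 0 3 * M 1 2 * M 2 0 * M 3 1 + M 0 3 * M 1 2 * M 2 1 * M 3 0 := by
  rw [Matrix.det_succ_row_zero]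
  simp [Fin.sum_univ_succ, Matrix.det_fin_three, Fin.succAbove,
    show (Fin.succ 2 : Fin 4) = 3 from rfl, show (Fin.castSucc 2 : Fin 4) = 2 from rfl,
    show ((1:Fin 4) < 3) from by decide]
  ring

lemma quad_root_neg (b₁ b₀ : ℝ) (hb₁ : 0 < b₁) (hb₀ : 0 < b₀) (z : ℂ)
    (h : z^2 + (b₁:ℂ)*z + (b₀:ℂ) = 0) : z.re < 0 := by
  by_contra hc
  push_neg at hc
  have hre := congrArg Complex.re h
  have him := congrArg Complex.im h
  simp [Complex.add_re, Complex.add_im, Complex.mul_re, Complex.mul_im, pow_two] at hre him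
  have him' : z.im * (2*z.re + b₁) = 0 := by nlinarith
  rcases mul_eq_zero.1 him' with h0 | h0
  · nlinarith
  · nlinarith



/-- Without police (`π̄ = 0`) and for a nonzero spatial mode `μ > 0`, if the quadratic
coefficients satisfy `b₁ > 0` and `b₀ > 0` then, for every delay `τ > 0`, every complex
root of the characteristic polynomial has negative real part: the homogeneous
equilibrium is linearly stable at mode `μ` for all delays. -/
theorem stmt_4 (η μ Abar ρbar Hbar b₁ b₀ : ℝ)
    (hη : 0 < η) (hμ : 0 < μ)
    (hA : 0 < Abar) (hρ : 0 < ρbar)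
    (hH : Hbar = ρbar * Abar)
    (hb₁def : b₁ = (1 + η) * μ + 1 + Abar - ρbar)
    (hb₀def : b₀ = (η * μ + 1) * (μ + Abar) - 3 * μ * ρbar)
    (hb₁ : 0 < b₁) (hb₀ : 0 < b₀)
    (J : ℝ → Matrix (Fin 4) (Fin 4) ℂ)
    (hJ : ∀ τ : ℝ, 0 < τ →
      J τ = !![((-η * μ - 1 + ρbar : ℝ) : ℂ), ((Abar : ℝ) : ℂ), ((-Hbar : ℝ) : ℂ), 0;
               ((2 * μ * ρbar / Abar - ρbar : ℝ) : ℂ), ((-μ - Abar : ℝ) : ℂ), 0, 0;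
               0, 0, ((-μ : ℝ) : ℂ), 0;
               ((ρbar / τ : ℝ) : ℂ), ((Abar / τ : ℝ) : ℂ), ((-Hbar / τ : ℝ) : ℂ), ((-1 / τ : ℝ) : ℂ)]) :
    ∀ τ : ℝ, 0 < τ →
      ∀ lam : ℂ, (lam • (1 : Matrix (Fin 4) (Fin 4) ℂ) - J τ).det = 0 → lam.re < 0 := by
  intro τ hτ lam hdet
  have hA0 : (Abar:ℂ) ≠ 0 := by exact_mod_cast hA.ne'
  have hτ0 : (τ:ℂ) ≠ 0 := by exact_mod_cast hτ.ne'
  have hfac : (lam • (1 : Matrix (Fin 4) (Fin 4) ℂ) - J τ).det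
      = (lam + ((1/τ : ℝ):ℂ)) * ((lam + (μ:ℂ)) * (lam^2 + (b₁:ℂ)*lam + (b₀:ℂ))) := by
    rw [hJ τ hτ, my_det_fin_four]
    subst hH hb₁def hb₀def
    simp [Matrix.sub_apply, Matrix.smul_apply, Matrix.one_apply]
    field_simp
    ring
  rw [hfac] at hdet
  rcases mul_eq_zero.1 hdet with h | h
  · have hl : lam = -((1/τ : ℝ):ℂ) := by linear_combination h
    rw [hl]
    simp only [Complex.neg_re, Complex.ofReal_re, neg_neg, Left.neg_neg_iff]
    positivity
  rcases mul_eq_zero.1 h with h | h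
  · have hl : lam = -((μ : ℝ):ℂ) := by linear_combination h
    rw [hl]
    simpa using hμ
  · exact quad_root_neg b₁ b₀ hb₁ hb₀ lam h
end

section
/- The discrete agent-based model admits a spatially homogeneous equilibrium. Let Δt > 0, h > 0, Γ > 0, θ > 0, ω > 0, β ≥ 0, m̄ ≥ 0, A⁰ > 0 and 0 ≤ Σ < 1. Define E := exp(−β·m̄/h²), B̄ := (θ·Γ/ω)·(1−Σ)·E, Ā := A⁰ + B̄, p̄ := 1 − exp(−Ā·E·Δt), n̄ := (Δt·Γ/p̄)·(1−Σ)·E, and H̄ := n̄·p̄/(h²·Δt). Then: (i) 0 < p̄ < 1; (ii) B̄ = B̄·(1 − ω·Δt) + θ·n̄·p̄ (the attractiveness update is stationary, the discrete Laplacian vanishing on homogeneous states); (iii) n̄ = n̄·(1 − p̄) + E·Γ·(1−Σ)·Δt (the criminal-number update is stationary); and (iv) H̄ = (1 − Δt/τ)·H̄ + (Δt/τ)·(n̄·p̄/(h²·Δt)) for every τ > 0 (the delayed crime signal update is stationary). -/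
open Real

lemma one_sub_exp_neg_pos {x : ℝ} (hx : 0 < x) : 0 < 1 - exp (-x) :=
  sub_pos.mpr (exp_lt_one_iff.mpr (neg_neg_of_pos hx))

lemma one_sub_exp_neg_lt_one (x : ℝ) : 1 - exp (-x) < 1 :=
  sub_lt_self 1 (exp_pos _)

theorem stmt_10_general (Δt h Γ θ ω β mbar A₀ Sig E Bbar Abar pbar nbar Hbar : ℝ)
    (hΔt : 0 < Δt) (hΓ : 0 < Γ) (hθ : 0 < θ) (hω : 0 < ω)
    (hA₀ : 0 < A₀) (hSig₁ : Sig < 1)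
    (hE : E = Real.exp (-β * mbar / h ^ 2))
    (hB : Bbar = (θ * Γ / ω) * (1 - Sig) * E)
    (hA : Abar = A₀ + Bbar)
    (hp : pbar = 1 - Real.exp (-(Abar * E * Δt)))
    (hn : nbar = (Δt * Γ / pbar) * (1 - Sig) * E)
    (hHb : Hbar = nbar * pbar / (h ^ 2 * Δt)) :
    (0 < pbar ∧ pbar < 1)
    ∧ Bbar = Bbar * (1 - ω * Δt) + θ * (nbar * pbar)
    ∧ nbar = nbar * (1 - pbar) + E * Γ * (1 - Sig) * Δt
    ∧ ∀ τ : ℝ, 0 < τ →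
        Hbar = (1 - Δt / τ) * Hbar + (Δt / τ) * (nbar * pbar / (h ^ 2 * Δt)) := by
  have hE₀ : 0 < E := hE ▸ exp_pos _
  have hSig : 0 < 1 - Sig := sub_pos.mpr hSig₁
  have hB₀ : 0 < Bbar := hB ▸ by positivity
  have hp₀ : 0 < pbar := hp ▸ one_sub_exp_neg_pos (by rw [hA]; positivity)
  -- Expected burglaries equal the inflow of new criminals; (ii) and (iii) both reduce to this.
  have hflux : nbar * pbar = Δt * Γ * (1 - Sig) * E := by
    rw [hn]; field_simp
  refine ⟨⟨hp₀, hp ▸ one_sub_exp_neg_lt_one _⟩, ?_, ?_, fun τ _ ↦ ?_⟩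
  · rw [hflux, hB]; field_simp; ring
  · linear_combination hflux
  · rw [← hHb]; ring

/-- The discrete agent-based model admits a spatially homogeneous equilibrium: the
burglary probability lies strictly between 0 and 1, and the attractiveness update,
criminal-number update, and delayed-crime-signal update are all stationary.
(`Sig` denotes the arrest probability Σ.) -/
theorem stmt_10 (Δt h Γ θ ω β mbar A₀ Sig E Bbar Abar pbar nbar Hbar : ℝ)
    (hΔt : 0 < Δt) (hh : 0 < h) (hΓ : 0 < Γ) (hθ : 0 < θ) (hω : 0 < ω)
    (hβ : 0 ≤ β) (hm : 0 ≤ mbar) (hA₀ : 0 < A₀) (hSig₀ : 0 ≤ Sig) (hSig₁ : Sig < 1)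
    (hE : E = Real.exp (-β * mbar / h ^ 2))
    (hB : Bbar = (θ * Γ / ω) * (1 - Sig) * E)
    (hA : Abar = A₀ + Bbar)
    (hp : pbar = 1 - Real.exp (-(Abar * E * Δt)))
    (hn : nbar = (Δt * Γ / pbar) * (1 - Sig) * E)
    (hHb : Hbar = nbar * pbar / (h ^ 2 * Δt)) :
    (0 < pbar ∧ pbar < 1)
    ∧ Bbar = Bbar * (1 - ω * Δt) + θ * (nbar * pbar)
    ∧ nbar = nbar * (1 - pbar) + E * Γ * (1 - Sig) * Δt
    ∧ ∀ τ : ℝ, 0 < τ →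
        Hbar = (1 - Δt / τ) * Hbar + (Δt / τ) * (nbar * pbar / (h ^ 2 * Δt)) :=
  stmt_10_general Δt h Γ θ ω β mbar A₀ Sig E Bbar Abar pbar nbar Hbar hΔt hΓ hθ hω hA₀ hSig₁ hE hB
    hA hp hn hHb
end
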